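/- arXiv:2304.03233 — 3 statements merged into one kernel-verified Lean document; each statement's English description precedes it below -/
import Mathlib

section
/- Let G be a graph, M a subset of vertices, and s a vertex. There is at most one permutation π = (m_1, ..., m_{|M|}) of M such that some shortest path P in G starts at s, contains all vertices of M, and the vertices of M appear on P in exactly the order π. -/
open SimpleGraph

private lemma dist_getVert_le {V : Type*} {G : SimpleGraph V} (hG : G.Connected)
    {s t : V} (p : G.Walk s t) (i : ℕ) : G.dist s (p.getVert i) ≤ i := by
  induction p generalizing i with
  | nil => simp [SimpleGraph.Walk.getVert, SimpleGraph.dist_self]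
  | cons h q ih =>
    cases i with
    | zero => simp [SimpleGraph.Walk.getVert]
    | succ n =>
      rw [SimpleGraph.Walk.getVert_cons_succ]
      calc G.dist _ _ ≤ G.dist _ _ + G.dist _ _ := hG.dist_triangle
        _ ≤ 1 + n := by
            gcongr
            · simpa using SimpleGraph.dist_le (SimpleGraph.Walk.cons h SimpleGraph.Walk.nil)
            · exact ih n
        _ = n + 1 := by omega

private lemma dist_getVert_right_le {V : Type*} {G : SimpleGraph V}
    {s t : V} (p : G.Walk s t) (i : ℕ) : G.dist (p.getVert i) t ≤ p.length - i := by
  induction p generalizing i with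
  | nil => simp [SimpleGraph.Walk.getVert]
  | cons h q ih =>
    cases i with
    | zero =>
      simpa [SimpleGraph.Walk.getVert] using SimpleGraph.dist_le (SimpleGraph.Walk.cons h q)
    | succ n =>
      rw [SimpleGraph.Walk.getVert_cons_succ]
      simpa using ih n

private lemma dist_getVert_eq {V : Type*} {G : SimpleGraph V} (hG : G.Connected)
    {s t : V} (p : G.Walk s t) (hps : p.length = G.dist s t) {i : ℕ} (hi : i ≤ p.length) :
    G.dist s (p.getVert i) = i := by
  have h1 := dist_getVert_le hG p i
  have h2 := dist_getVert_right_le p i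
  have h3 : G.dist s t ≤ G.dist s (p.getVert i) + G.dist (p.getVert i) t := hG.dist_triangle
  omega

private lemma support_getElem {V : Type*} {G : SimpleGraph V} {s t : V} (p : G.Walk s t)
    (i : ℕ) (h : i < p.support.length) : p.support[i] = p.getVert i := by
  induction p generalizing i with
  | nil =>
    cases i with
    | zero => simp [SimpleGraph.Walk.getVert]
    | succ n => simp at h
  | cons hadj q ih =>
    cases i with
    | zero => simp [SimpleGraph.Walk.getVert]
    | succ n =>
      simp only [SimpleGraph.Walk.support_cons, SimpleGraph.Walk.getVert_cons_succ]
      rw [List.getElem_cons_succ]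
      exact ih n (by simpa [SimpleGraph.Walk.support_cons] using h)

private lemma support_pairwise {V : Type*} {G : SimpleGraph V} (hG : G.Connected)
    {s t : V} (p : G.Walk s t) (hps : p.length = G.dist s t) :
    p.support.Pairwise (fun a b => G.dist s a < G.dist s b) := by
  rw [List.pairwise_iff_getElem]
  intro i j hi hj hij
  rw [support_getElem p i hi, support_getElem p j hj]
  rw [SimpleGraph.Walk.length_support] at hi hj
  rw [dist_getVert_eq hG p hps (by omega), dist_getVert_eq hG p hps (by omega)]
  exact hij

/-- For any graph `G`, set `M` of vertices and vertex `s`, there is at most one order in which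
the vertices of `M` can appear on a shortest path starting at `s` and containing all of `M`:
any two such shortest paths list the vertices of `M` in the same order. -/
theorem stmt3 {V : Type*} [Fintype V] [DecidableEq V] (G : SimpleGraph V) (hG : G.Connected)
    (M : Finset V) (s : V) {t₁ t₂ : V}
    (p : G.Walk s t₁) (q : G.Walk s t₂)
    (hp : p.IsPath) (hq : q.IsPath)
    (hps : p.length = G.dist s t₁) (hqs : q.length = G.dist s t₂)
    (hpM : ∀ m ∈ M, m ∈ p.support) (hqM : ∀ m ∈ M, m ∈ q.support) :
    p.support.filter (fun x => decide (x ∈ M)) = q.support.filter (fun x => decide (x ∈ M)) := by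
  set R : V → V → Prop := fun a b => G.dist s a < G.dist s b with hR
  haveI : IsAntisymm V R := ⟨fun a b hab hba => absurd hba (by simp only [hR] at *; omega)⟩
  have hsp : (p.support.filter (fun x => decide (x ∈ M))).Pairwise R :=
    (support_pairwise hG p hps).sublist List.filter_sublist
  have hsq : (q.support.filter (fun x => decide (x ∈ M))).Pairwise R :=
    (support_pairwise hG q hqs).sublist List.filter_sublist
  refine List.Perm.eq_of_pairwise' hsp hsq ?_
  rw [List.perm_ext_iff_of_nodup (hp.support_nodup.sublist List.filter_sublist)
    (hq.support_nodup.sublist List.filter_sublist)]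
  intro x
  simp only [List.mem_filter, decide_eq_true_eq]
  constructor
  · rintro ⟨-, hx⟩; exact ⟨hqM x hx, hx⟩
  · rintro ⟨-, hx⟩; exact ⟨hpM x hx, hx⟩
end

section
/- Let G be a connected graph, S ⊆ V(G), ℓ ≥ 0 an integer, and P a shortest path with eccentricity at most ℓ in G. Suppose a connected component C of G − S contains a vertex v such that d_G(v, m) > ℓ for all m ∈ S ∩ V(P) and d_G(v, x) > ℓ − d_G(x, P) for all x ∈ S \ V(P). Then P contains at least one vertex of C. -/
/-- Distance from a vertex `v` to (the vertex set of) a walk `p`. -/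
noncomputable def distToWalk {V : Type*} (G : SimpleGraph V) {a b : V} (p : G.Walk a b) (v : V) : ℕ :=
  sInf {d | ∃ w ∈ p.support, G.dist v w = d}

lemma reach_induce {V : Type*} (G : SimpleGraph V) (S : Set V) :
    ∀ {x y : V} (p : G.Walk x y) (h : ∀ z ∈ p.support, z ∉ S),
      (G.induce {w | w ∉ S}).Reachable
        ⟨x, h x p.start_mem_support⟩ ⟨y, h y p.end_mem_support⟩ := by
  intro x y p
  induction p with
  | nil => intro h; rfl
  | cons hadj q ih =>
    intro h
    have h1 : ∀ z ∈ q.support, z ∉ S := fun z hz =>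
      h z (by simp [hz])
    refine SimpleGraph.Reachable.trans ?_ (ih h1)
    exact SimpleGraph.Adj.reachable (by simpa using hadj)

/-- Let `P` be a shortest path of eccentricity at most `ℓ` and suppose a connected component
of `G − S` contains a vertex `v` with `d_G(v,m) > ℓ` for all `m ∈ S ∩ V(P)` and
`d_G(v,x) > ℓ − d_G(x,P)` for all `x ∈ S \ V(P)`. Then `P` contains at least one vertex
of that component, i.e. some vertex of `P` outside `S` is reachable from `v` in `G − S`. -/
theorem stmt10 {V : Type*} [Fintype V] (G : SimpleGraph V) (hG : G.Connected)
    (S : Set V) (ℓ : ℕ)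
    {a b : V} (P : G.Walk a b) (hP : P.IsPath) (hPs : P.length = G.dist a b)
    (hecc : ∀ w : V, distToWalk G P w ≤ ℓ)
    (v : V) (hvS : v ∉ S)
    (hv1 : ∀ m ∈ S, m ∈ P.support → ℓ < G.dist v m)
    (hv2 : ∀ x ∈ S, x ∉ P.support → ℓ - distToWalk G P x < G.dist v x) :
    ∃ u ∈ P.support, ∃ (hu : u ∉ S),
      (G.induce {w | w ∉ S}).Reachable ⟨u, hu⟩ ⟨v, hvS⟩ := by
  classical
  -- the set of distances from v to P is nonempty, sInf is attained
  have hne : {d | ∃ w ∈ P.support, G.dist v w = d}.Nonempty :=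
    ⟨G.dist v a, a, P.start_mem_support, rfl⟩
  obtain ⟨u, huP, hud⟩ := Nat.sInf_mem hne
  -- a shortest walk from v to u
  obtain ⟨Q, hQ⟩ := hG.exists_walk_length_eq_dist v u
  have hQℓ : Q.length ≤ ℓ := by
    rw [hQ, hud]; exact hecc v
  -- Q avoids S
  have havoid : ∀ z ∈ Q.support, z ∉ S := by
    intro x hx hxS
    have hsplit := Q.take_spec hx
    have hlen : (Q.takeUntil x hx).length + (Q.dropUntil x hx).length = Q.length := by
      rw [← SimpleGraph.Walk.length_append, hsplit]
    have hvx : G.dist v x ≤ (Q.takeUntil x hx).length :=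
      SimpleGraph.dist_le _
    have hxu : G.dist x u ≤ (Q.dropUntil x hx).length :=
      SimpleGraph.dist_le _
    by_cases hxP : x ∈ P.support
    · have := hv1 x hxS hxP
      have : ℓ < ℓ := lt_of_lt_of_le this (hvx.trans ((Nat.le_add_right _ _).trans (hlen ▸ hQℓ)))
      exact lt_irrefl _ this
    · have hdxP : distToWalk G P x ≤ G.dist x u :=
        Nat.sInf_le ⟨u, huP, rfl⟩
      have hsum : G.dist v x + distToWalk G P x ≤ ℓ := by
        calc G.dist v x + distToWalk G P x
            ≤ (Q.takeUntil x hx).length + (Q.dropUntil x hx).length :=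
              Nat.add_le_add hvx (hdxP.trans hxu)
          _ = Q.length := hlen
          _ ≤ ℓ := hQℓ
      have : G.dist v x ≤ ℓ - distToWalk G P x := Nat.le_sub_of_add_le hsum
      exact absurd this (not_le.mpr (hv2 x hxS hxP))
  refine ⟨u, huP, havoid u Q.end_mem_support, ?_⟩
  exact (reach_induce G S Q havoid).symm
end

section
/- Let G be a graph and H the graph constructed in the W[2]-hardness reduction from Dominating Set (with clique V*, vertex groups U_1,...,U_k, connectors z_1,...,z_{k−1}, terminals s, a, b, t, and ladders between each u_{ij} and the neighborhood N_G[v_j] in V*). If D = {v_{t_1},...,v_{t_k}} is a dominating set of G, then the path P = (a, u_{1 t_1}, z_1, u_{2 t_2}, z_2, ..., z_{k−1}, u_{k t_k}, b) is an induced path in H of length 2k, hence a shortest a–b path, and every vertex of H is at distance at most k+1 from P. -/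
open SimpleGraph

namespace RedAux

variable {V : Type*} {G : SimpleGraph V}

/-- Build a walk along a vertex sequence. -/
def mkWalk (f : ℕ → V) : ∀ (m d : ℕ),
    (∀ k, m ≤ k → k < m + d → G.Adj (f k) (f (k+1))) → G.Walk (f m) (f (m+d))
  | _, 0, _ => SimpleGraph.Walk.nil
  | m, d+1, h =>
    SimpleGraph.Walk.cons (h m le_rfl (by omega))
      ((mkWalk f (m+1) d (fun k h1 h2 => h k (by omega) (by omega))).copy rfl
        (congrArg f (by omega)))

@[simp] lemma mkWalk_length (f : ℕ → V) (m d : ℕ) (h) :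
    (mkWalk (G := G) f m d h).length = d := by
  induction d generalizing m with
  | zero => rfl
  | succ d ih => simp [mkWalk, ih]

lemma mkWalk_getVert (f : ℕ → V) (m d : ℕ) (h) (i : ℕ) :
    (mkWalk (G := G) f m d h).getVert i = f (m + min i d) := by
  induction d generalizing m i with
  | zero => simp [mkWalk, SimpleGraph.Walk.getVert]
  | succ d ih =>
    cases i with
    | zero => simp [mkWalk]
    | succ i =>
      simp only [mkWalk, SimpleGraph.Walk.getVert_cons_succ,
        SimpleGraph.Walk.getVert_copy, ih]
      congr 1
      omega

lemma mkWalk_support (f : ℕ → V) (m d : ℕ) (h) {x : V}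
    (hx : x ∈ (mkWalk (G := G) f m d h).support) :
    ∃ k, m ≤ k ∧ k ≤ m + d ∧ x = f k := by
  induction d generalizing m with
  | zero =>
    simp [mkWalk] at hx
    exact ⟨m, le_rfl, le_rfl, hx⟩
  | succ d ih =>
    simp only [mkWalk, SimpleGraph.Walk.support_cons, SimpleGraph.Walk.support_copy,
      List.mem_cons] at hx
    rcases hx with rfl | hx
    · exact ⟨m, le_rfl, by omega, rfl⟩
    · obtain ⟨k, h1, h2, h3⟩ := ih _ _ hx
      exact ⟨k, by omega, by omega, h3⟩

lemma mkWalk_mem_support (f : ℕ → V) (m d : ℕ) (h) (k : ℕ) (h1 : m ≤ k) (h2 : k ≤ m + d) :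
    f k ∈ (mkWalk (G := G) f m d h).support := by
  rw [SimpleGraph.Walk.mem_support_iff_exists_getVert]
  exact ⟨k - m, by rw [mkWalk_getVert]; exact congrArg f (by omega), by simp; omega⟩

lemma mkWalk_isPath (f : ℕ → V) (m d : ℕ) (h)
    (hinj : ∀ k l, m ≤ k → k ≤ m + d → m ≤ l → l ≤ m + d → f k = f l → k = l) :
    (mkWalk (G := G) f m d h).IsPath := by
  induction d generalizing m with
  | zero => simp [mkWalk]
  | succ d ih =>
    simp only [mkWalk, SimpleGraph.Walk.cons_isPath_iff, SimpleGraph.Walk.isPath_copy,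
      SimpleGraph.Walk.support_copy]
    refine ⟨ih _ _ (fun k l h1 h2 h3 h4 => hinj k l (by omega) (by omega) (by omega) (by omega)), ?_⟩
    intro hmem
    obtain ⟨k, h1, h2, h3⟩ := mkWalk_support _ _ _ _ hmem
    have := hinj m k (le_rfl) (by omega) (by omega) (by omega) h3
    omega

end RedAux


/-- Vertex type of the graph `H` in the W[2]-hardness reduction from Dominating Set,
for a source graph on `Fin n` and parameter `k = K + 1`:
`orig` is the clique `V*` (a copy of `V(G)`), `u i j` the `i`-th representative `u_{ij}`
of `v_j`, `z i` the connectors, `s, a, b, t` the terminals, `ap`/`bp` the internal vertices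
of the `s`–`a` and `t`–`b` paths of length `k+1`, and `w i j t p` the `p`-th internal vertex
of the ladder path from `u_{ij}` to `v_t` (for `v_t ∈ N_G[v_j]`). -/
inductive HV (n K : ℕ) : Type
  | orig : Fin n → HV n K
  | u : Fin (K + 1) → Fin n → HV n K
  | z : Fin K → HV n K
  | s : HV n K
  | a : HV n K
  | b : HV n K
  | t : HV n K
  | ap : Fin (K + 1) → HV n K
  | bp : Fin (K + 1) → HV n K
  | w : Fin (K + 1) → Fin n → Fin n → Fin (K + 1) → HV n K

/-- The edges of the reduction graph `H` (as a base relation, later symmetrized). -/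
inductive HRel (n K : ℕ) (G : SimpleGraph (Fin n)) : HV n K → HV n K → Prop
  | clique (i j : Fin n) : HRel n K G (HV.orig i) (HV.orig j)
  | zlow (i : Fin K) (j : Fin n) : HRel n K G (HV.z i) (HV.u i.castSucc j)
  | zhigh (i : Fin K) (j : Fin n) : HRel n K G (HV.z i) (HV.u i.succ j)
  | au (j : Fin n) : HRel n K G HV.a (HV.u 0 j)
  | bu (j : Fin n) : HRel n K G HV.b (HV.u (Fin.last K) j)
  | sap : HRel n K G HV.s (HV.ap 0)
  | apStep (i : Fin K) : HRel n K G (HV.ap i.castSucc) (HV.ap i.succ)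
  | apa : HRel n K G (HV.ap (Fin.last K)) HV.a
  | tbp : HRel n K G HV.t (HV.bp 0)
  | bpStep (i : Fin K) : HRel n K G (HV.bp i.castSucc) (HV.bp i.succ)
  | bpb : HRel n K G (HV.bp (Fin.last K)) HV.b
  | uw (i : Fin (K + 1)) (j t : Fin n) (h : G.Adj j t ∨ t = j) :
      HRel n K G (HV.u i j) (HV.w i j t 0)
  | wStep (i : Fin (K + 1)) (j t : Fin n) (h : G.Adj j t ∨ t = j) (p : Fin K) :
      HRel n K G (HV.w i j t p.castSucc) (HV.w i j t p.succ)
  | wEnd (i : Fin (K + 1)) (j t : Fin n) (h : G.Adj j t ∨ t = j) :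
      HRel n K G (HV.w i j t (Fin.last K)) (HV.orig t)
  | ladderRung (i : Fin (K + 1)) (j t t' : Fin n)
      (h : G.Adj j t ∨ t = j) (h' : G.Adj j t' ∨ t' = j) (p : Fin (K + 1)) :
      HRel n K G (HV.w i j t p) (HV.w i j t' p)
  | ladderDiag (i : Fin (K + 1)) (j t t' : Fin n)
      (h : G.Adj j t ∨ t = j) (h' : G.Adj j t' ∨ t' = j) (p : Fin K) :
      HRel n K G (HV.w i j t p.castSucc) (HV.w i j t' p.succ)
  | ladderEnd (i : Fin (K + 1)) (j t t' : Fin n)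
      (h : G.Adj j t ∨ t = j) (h' : G.Adj j t' ∨ t' = j) :
      HRel n K G (HV.w i j t (Fin.last K)) (HV.orig t')

/-- The graph `H` of the W[2]-hardness reduction. -/
def Hgraph (n K : ℕ) (G : SimpleGraph (Fin n)) : SimpleGraph (HV n K) :=
  SimpleGraph.fromRel (HRel n K G)
namespace RedAux

/-- move `x` toward `K+1` by `m` steps, clamped. -/
def tow (K : ℕ) (x : ℤ) (m : ℕ) : ℤ :=
  if x ≤ K + 1 then min (x + m) (K + 1) else max (x - m) (K + 1)

/-- potential function -/
def fval (n K : ℕ) : HV n K → ℤ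
  | .orig _ => K + 1
  | .u i _ => 2 * i.val + 1
  | .z i => 2 * i.val + 2
  | .s => 0
  | .a => 0
  | .b => 2 * K + 2
  | .t => 2 * K + 2
  | .ap _ => 0
  | .bp _ => 2 * K + 2
  | .w i _ _ p => tow K (2 * i.val + 1) (p.val + 1)

lemma lip {n K : ℕ} {G : SimpleGraph (Fin n)} {x y : HV n K} (h : HRel n K G x y) :
    (fval n K x - fval n K y).natAbs ≤ 1 := by
  cases h with
  | clique i j => simp [fval]
  | zlow i j => simp [fval]
  | zhigh i j => simp [fval]; omega
  | au j => simp [fval]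
  | bu j => simp [fval]
  | sap => simp [fval]
  | apStep i => simp [fval]
  | apa => simp [fval]
  | tbp => simp [fval]
  | bpStep i => simp [fval]
  | bpb => simp [fval]
  | uw i j t h => have := i.isLt; simp [fval, tow]; split_ifs <;> omega
  | wStep i j t h p =>
      have := i.isLt; have := p.isLt
      simp [fval, tow]; split_ifs <;> omega
  | wEnd i j t h => have := i.isLt; simp [fval, tow]; split_ifs <;> omega
  | ladderRung i j t t' h h' p => simp [fval]
  | ladderDiag i j t t' h h' p =>
      have := i.isLt; have := p.isLt
      simp [fval, tow]; split_ifs <;> omega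
  | ladderEnd i j t t' h h' => have := i.isLt; simp [fval, tow]; split_ifs <;> omega

lemma lipAdj {n K : ℕ} {G : SimpleGraph (Fin n)} {x y : HV n K}
    (h : (Hgraph n K G).Adj x y) : (fval n K x - fval n K y).natAbs ≤ 1 := by
  rcases h.2 with h | h
  · exact lip h
  · have := lip h; omega

lemma walk_lb {n K : ℕ} {G : SimpleGraph (Fin n)} {x y : HV n K}
    (p : (Hgraph n K G).Walk x y) :
    (fval n K x - fval n K y).natAbs ≤ p.length := by
  induction p with
  | nil => simp
  | cons h p ih =>
    have := lipAdj h
    simp only [SimpleGraph.Walk.length_cons]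
    omega

end RedAux
namespace RedAux

open SimpleGraph

variable {n K : ℕ}

/-- the `u`-level vertices of the path, as a function of `ℕ`. -/
def useq (D : Fin (K + 1) → Fin n) (i : ℕ) : HV n K :=
  if h : i < K + 1 then HV.u ⟨i, h⟩ (D ⟨i, h⟩) else HV.b

/-- the `z`-level vertices of the path. -/
def zseq (n : ℕ) (K : ℕ) (i : ℕ) : HV n K :=
  if h : i < K then HV.z ⟨i, h⟩ else HV.b

/-- the vertex sequence of the path `P`. -/
def seq (D : Fin (K + 1) → Fin n) (m : ℕ) : HV n K :=
  if m = 0 then HV.a else if m % 2 = 1 then useq D (m / 2) else zseq n K (m / 2 - 1)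

variable {D : Fin (K + 1) → Fin n}

lemma seq_zero : seq D 0 = HV.a := rfl

lemma seq_odd (i : ℕ) (h : i < K + 1) : seq D (2 * i + 1) = HV.u ⟨i, h⟩ (D ⟨i, h⟩) := by
  simp [seq, useq, show (2 * i + 1) % 2 = 1 by omega, show (2 * i + 1) / 2 = i by omega, h]

lemma seq_even (i : ℕ) (h : i < K) : seq D (2 * i + 2) = HV.z ⟨i, h⟩ := by
  simp [seq, zseq, show (2 * i + 2) % 2 = 0 by omega, show (2 * i + 2) / 2 = i + 1 by omega, h]

lemma seq_last : seq D (2 * K + 2) = HV.b := by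
  simp [seq, zseq, show (2 * K + 2) % 2 = 0 by omega, show (2 * K + 2) / 2 = K + 1 by omega]

lemma fval_seq (m : ℕ) (hm : m ≤ 2 * K + 2) : fval n K (seq D m) = (m : ℤ) := by
  rcases Nat.even_or_odd m with ⟨i, hi⟩ | ⟨i, hi⟩
  · rcases Nat.eq_zero_or_pos i with rfl | hp
    · subst hi; simp [seq_zero, fval]
    · rcases Nat.lt_or_ge i (K + 1) with hK | hK
      · rw [show m = 2 * (i - 1) + 2 by omega, seq_even (i - 1) (by omega)]
        simp [fval]
      · rw [show m = 2 * K + 2 by omega, seq_last]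
        simp [fval]
  · rw [hi, seq_odd i (by omega)]
    simp [fval]

lemma seq_adj {G : SimpleGraph (Fin n)} (m : ℕ) (hm : m < 2 * K + 2) :
    (Hgraph n K G).Adj (seq D m) (seq D (m + 1)) := by
  rcases Nat.even_or_odd m with ⟨i, hi⟩ | ⟨i, hi⟩
  · rcases Nat.eq_zero_or_pos i with rfl | hp
    · subst hi
      rw [seq_zero, show (0 : ℕ) + 1 = 2 * 0 + 1 by omega, seq_odd 0 (by omega)]
      refine ⟨by simp, Or.inl ?_⟩
      have e : (0 : Fin (K + 1)) = ⟨0, by omega⟩ := by ext; simp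
      rw [← e]
      exact HRel.au _
    · have hK : i < K + 1 := by omega
      rw [show m = 2 * (i - 1) + 2 by omega, seq_even (i - 1) (by omega),
        show 2 * (i - 1) + 2 + 1 = 2 * i + 1 by omega, seq_odd i hK]
      refine ⟨by simp, Or.inl ?_⟩
      have e : (⟨i - 1, by omega⟩ : Fin K).succ = (⟨i, hK⟩ : Fin (K + 1)) := by
        ext; simp [Fin.val_succ]; omega
      rw [← e]
      exact HRel.zhigh _ _
  · have hK : i < K + 1 := by omega
    rw [hi, seq_odd i hK]
    rcases Nat.lt_or_ge i K with hiK | hiK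
    · rw [show 2 * i + 1 + 1 = 2 * i + 2 by omega, seq_even i hiK]
      refine ⟨by simp, Or.inr ?_⟩
      have e : (⟨i, hiK⟩ : Fin K).castSucc = (⟨i, hK⟩ : Fin (K + 1)) := by
        ext; simp
      rw [← e]
      exact HRel.zlow _ _
    · have hik : i = K := by omega
      subst hik
      rw [show 2 * i + 1 + 1 = 2 * i + 2 by omega, seq_last]
      refine ⟨by simp, Or.inr ?_⟩
      have e : Fin.last i = (⟨i, hK⟩ : Fin (i + 1)) := by ext; simp
      rw [← e]
      exact HRel.bu _

end RedAux
namespace RedAux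

open SimpleGraph

variable {n K : ℕ} {G : SimpleGraph (Fin n)}

/-- the ladder path from `u i j` down to `orig t`. -/
def ladFun (i : Fin (K + 1)) (j t : Fin n) (q : ℕ) : HV n K :=
  if q = 0 then HV.u i j else if hq : q - 1 < K + 1 then HV.w i j t ⟨q - 1, hq⟩ else HV.orig t

lemma ladFun_zero {i : Fin (K + 1)} {j t : Fin n} : ladFun i j t 0 = HV.u i j := rfl

lemma ladFun_succ {i : Fin (K + 1)} {j t : Fin n} (q : ℕ) (h : q < K + 1) :
    ladFun i j t (q + 1) = HV.w i j t ⟨q, h⟩ := by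
  simp [ladFun, h]

lemma ladFun_end {i : Fin (K + 1)} {j t : Fin n} : ladFun i j t (K + 2) = HV.orig t := by
  simp [ladFun]

lemma ladFun_adj {i : Fin (K + 1)} {j t : Fin n} (hadm : G.Adj j t ∨ t = j)
    (k : ℕ) (hk : k < K + 2) :
    (Hgraph n K G).Adj (ladFun i j t k) (ladFun i j t (k + 1)) := by
  rcases Nat.eq_zero_or_pos k with rfl | hp
  · rw [ladFun_zero, show (0 : ℕ) + 1 = 0 + 1 by rfl, ladFun_succ 0 (by omega)]
    refine ⟨by simp, Or.inl ?_⟩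
    have e : (0 : Fin (K + 1)) = ⟨0, by omega⟩ := by ext; simp
    rw [← e]
    exact HRel.uw i j t hadm
  · obtain ⟨l, rfl⟩ : ∃ l, k = l + 1 := ⟨k - 1, by omega⟩
    rcases Nat.lt_or_ge l K with hl | hl
    · rw [ladFun_succ l (by omega), ladFun_succ (l + 1) (by omega)]
      refine ⟨by simp [Fin.ext_iff], Or.inl ?_⟩
      have e1 : (⟨l, hl⟩ : Fin K).castSucc = (⟨l, by omega⟩ : Fin (K + 1)) := by ext; simp
      have e2 : (⟨l, hl⟩ : Fin K).succ = (⟨l + 1, by omega⟩ : Fin (K + 1)) := by ext; simp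
      rw [← e1, ← e2]
      exact HRel.wStep i j t hadm _
    · have : l = K := by omega
      subst this
      rw [ladFun_succ l (by omega), show l + 1 + 1 = l + 2 by rfl, ladFun_end]
      refine ⟨by simp, Or.inl ?_⟩
      have e : Fin.last l = (⟨l, by omega⟩ : Fin (l + 1)) := by ext; simp
      rw [← e]
      exact HRel.wEnd i j t hadm

/-- walk from `u i j` to `orig t` of length `K + 2`. -/
def uOrigWalk (i : Fin (K + 1)) (j t : Fin n) (hadm : G.Adj j t ∨ t = j) :
    (Hgraph n K G).Walk (HV.u i j) (HV.orig t) :=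
  ((mkWalk (ladFun i j t) 0 (K + 2) (fun k _ h2 => ladFun_adj hadm k (by omega))).copy
    ladFun_zero (by rw [show 0 + (K + 2) = K + 2 by omega, ladFun_end]))

lemma uOrigWalk_length (i : Fin (K + 1)) (j t : Fin n) (hadm : G.Adj j t ∨ t = j) :
    (uOrigWalk (G := G) i j t hadm).length = K + 2 := by
  simp [uOrigWalk]

/-- walk from `u i j` to `w i j t p` of length `p + 1`. -/
def uWWalk (i : Fin (K + 1)) (j t : Fin n) (hadm : G.Adj j t ∨ t = j) (p : Fin (K + 1)) :
    (Hgraph n K G).Walk (HV.u i j) (HV.w i j t p) :=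
  ((mkWalk (ladFun i j t) 0 (p.val + 1) (fun k _ h2 => ladFun_adj hadm k (by have := p.isLt; omega))).copy
    ladFun_zero (by rw [show 0 + (p.val + 1) = p.val + 1 by omega, ladFun_succ p.val p.isLt]))

lemma uWWalk_length (i : Fin (K + 1)) (j t : Fin n) (hadm) (p : Fin (K + 1)) :
    (uWWalk (G := G) i j t hadm p).length = p.val + 1 := by
  simp [uWWalk]

/-- the `s`–`a` path. -/
def apFun (n K : ℕ) (q : ℕ) : HV n K :=
  if q = 0 then HV.s else if hq : q - 1 < K + 1 then HV.ap ⟨q - 1, hq⟩ else HV.a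

lemma apFun_zero : apFun n K 0 = HV.s := rfl

lemma apFun_succ (q : ℕ) (h : q < K + 1) : apFun n K (q + 1) = HV.ap ⟨q, h⟩ := by
  simp [apFun, h]

lemma apFun_end : apFun n K (K + 2) = HV.a := by simp [apFun]

lemma apFun_adj (k : ℕ) (hk : k < K + 2) :
    (Hgraph n K G).Adj (apFun n K k) (apFun n K (k + 1)) := by
  rcases Nat.eq_zero_or_pos k with rfl | hp
  · rw [apFun_zero, apFun_succ 0 (by omega)]
    refine ⟨by simp, Or.inl ?_⟩
    have e : (0 : Fin (K + 1)) = ⟨0, by omega⟩ := by ext; simp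
    rw [← e]
    exact HRel.sap
  · obtain ⟨l, rfl⟩ : ∃ l, k = l + 1 := ⟨k - 1, by omega⟩
    rcases Nat.lt_or_ge l K with hl | hl
    · rw [apFun_succ l (by omega), apFun_succ (l + 1) (by omega)]
      refine ⟨by simp [Fin.ext_iff], Or.inl ?_⟩
      have e1 : (⟨l, hl⟩ : Fin K).castSucc = (⟨l, by omega⟩ : Fin (K + 1)) := by ext; simp
      have e2 : (⟨l, hl⟩ : Fin K).succ = (⟨l + 1, by omega⟩ : Fin (K + 1)) := by ext; simp
      rw [← e1, ← e2]
      exact HRel.apStep _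
    · have : l = K := by omega
      subst this
      rw [apFun_succ l (by omega), show l + 1 + 1 = l + 2 by rfl, apFun_end]
      refine ⟨by simp, Or.inl ?_⟩
      have e : Fin.last l = (⟨l, by omega⟩ : Fin (l + 1)) := by ext; simp
      rw [← e]
      exact HRel.apa

/-- the `t`–`b` path. -/
def bpFun (n K : ℕ) (q : ℕ) : HV n K :=
  if q = 0 then HV.t else if hq : q - 1 < K + 1 then HV.bp ⟨q - 1, hq⟩ else HV.b

lemma bpFun_zero : bpFun n K 0 = HV.t := rfl

lemma bpFun_succ (q : ℕ) (h : q < K + 1) : bpFun n K (q + 1) = HV.bp ⟨q, h⟩ := by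
  simp [bpFun, h]

lemma bpFun_end : bpFun n K (K + 2) = HV.b := by simp [bpFun]

lemma bpFun_adj (k : ℕ) (hk : k < K + 2) :
    (Hgraph n K G).Adj (bpFun n K k) (bpFun n K (k + 1)) := by
  rcases Nat.eq_zero_or_pos k with rfl | hp
  · rw [bpFun_zero, bpFun_succ 0 (by omega)]
    refine ⟨by simp, Or.inl ?_⟩
    have e : (0 : Fin (K + 1)) = ⟨0, by omega⟩ := by ext; simp
    rw [← e]
    exact HRel.tbp
  · obtain ⟨l, rfl⟩ : ∃ l, k = l + 1 := ⟨k - 1, by omega⟩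
    rcases Nat.lt_or_ge l K with hl | hl
    · rw [bpFun_succ l (by omega), bpFun_succ (l + 1) (by omega)]
      refine ⟨by simp [Fin.ext_iff], Or.inl ?_⟩
      have e1 : (⟨l, hl⟩ : Fin K).castSucc = (⟨l, by omega⟩ : Fin (K + 1)) := by ext; simp
      have e2 : (⟨l, hl⟩ : Fin K).succ = (⟨l + 1, by omega⟩ : Fin (K + 1)) := by ext; simp
      rw [← e1, ← e2]
      exact HRel.bpStep _
    · have : l = K := by omega
      subst this
      rw [bpFun_succ l (by omega), show l + 1 + 1 = l + 2 by rfl, bpFun_end]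
      refine ⟨by simp, Or.inl ?_⟩
      have e : Fin.last l = (⟨l, by omega⟩ : Fin (l + 1)) := by ext; simp
      rw [← e]
      exact HRel.bpb

end RedAux
open RedAux SimpleGraph in
/-- If `D = {v_{t_1}, …, v_{t_k}}` (given as `D : Fin (K+1) → Fin n`, `k = K + 1`) is a
dominating set of `G`, then `H` has an induced (hence shortest) `a`–`b` path of length
`2k` through the vertices `u_{i, t_i}` and `z_i`, whose eccentricity is at most `k + 1`. -/
theorem stmt15 {n K : ℕ} (G : SimpleGraph (Fin n))
    (D : Fin (K + 1) → Fin n)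
    (hD : ∀ v : Fin n, ∃ i : Fin (K + 1), G.Adj (D i) v ∨ D i = v) :
    ∃ P : (Hgraph n K G).Walk HV.a HV.b,
      P.IsPath ∧
      P.length = 2 * (K + 1) ∧
      P.length = (Hgraph n K G).dist HV.a HV.b ∧
      (∀ i : Fin (K + 1), HV.u i (D i) ∈ P.support) ∧
      (∀ i : Fin K, HV.z i ∈ P.support) ∧
      (∀ i j : ℕ, i ≤ P.length → j ≤ P.length →
        (Hgraph n K G).Adj (P.getVert i) (P.getVert j) → j = i + 1 ∨ i = j + 1) ∧
      (∀ v : HV n K, ∃ w ∈ P.support, (Hgraph n K G).dist v w ≤ K + 2) := by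
  classical
  have hadjseq : ∀ k, 0 ≤ k → k < 0 + (2 * K + 2) →
      (Hgraph n K G).Adj (seq D k) (seq D (k + 1)) :=
    fun k _ h2 => seq_adj k (by omega)
  set P0 := mkWalk (seq D) 0 (2 * K + 2) hadjseq with hP0
  have hend : seq D (0 + (2 * K + 2)) = HV.b := by
    rw [show 0 + (2 * K + 2) = 2 * K + 2 by omega, seq_last]
  refine ⟨P0.copy seq_zero hend, ?_, ?_, ?_, ?_, ?_, ?_, ?_⟩
  case _ =>
    rw [SimpleGraph.Walk.isPath_copy]
    refine mkWalk_isPath _ _ _ _ (fun k l h1 h2 h3 h4 e => ?_)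
    have := congrArg (fval n K) e
    rw [fval_seq k (by omega), fval_seq l (by omega)] at this
    exact_mod_cast this
  case _ =>
    rw [SimpleGraph.Walk.length_copy, mkWalk_length]
    omega
  case _ =>
    have hub := SimpleGraph.dist_le (P0.copy seq_zero hend)
    have hreach : (Hgraph n K G).Reachable HV.a HV.b := ⟨P0.copy seq_zero hend⟩
    obtain ⟨q, hq⟩ := hreach.exists_walk_length_eq_dist
    have hlb := walk_lb q
    have hfab : (fval n K HV.a - fval n K HV.b).natAbs = 2 * K + 2 := by
      simp [fval]; omega
    rw [hfab, hq] at hlb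
    rw [SimpleGraph.Walk.length_copy, mkWalk_length] at hub ⊢
    omega
  case _ =>
    intro i
    rw [SimpleGraph.Walk.support_copy]
    have := mkWalk_mem_support (seq D) 0 (2 * K + 2) hadjseq (2 * i.val + 1)
      (by omega) (by have := i.isLt; omega)
    rwa [seq_odd i.val i.isLt, Fin.eta] at this
  case _ =>
    intro i
    rw [SimpleGraph.Walk.support_copy]
    have := mkWalk_mem_support (seq D) 0 (2 * K + 2) hadjseq (2 * i.val + 2)
      (by omega) (by have := i.isLt; omega)
    rwa [seq_even i.val i.isLt, Fin.eta] at this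
  case _ =>
    intro i j hi hj hadj
    rw [SimpleGraph.Walk.length_copy, mkWalk_length] at hi hj
    rw [SimpleGraph.Walk.getVert_copy, SimpleGraph.Walk.getVert_copy,
      mkWalk_getVert, mkWalk_getVert,
      show 0 + min i (2 * K + 2) = i by omega,
      show 0 + min j (2 * K + 2) = j by omega] at hadj
    have h1 := lipAdj hadj
    rw [fval_seq i (by omega), fval_seq j (by omega)] at h1
    have hne : i ≠ j := by
      rintro rfl
      exact hadj.ne rfl
    omega
  case _ =>
    have husup : ∀ i : Fin (K + 1), HV.u i (D i) ∈ (P0.copy seq_zero hend).support := by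
      intro i
      rw [SimpleGraph.Walk.support_copy]
      have := mkWalk_mem_support (seq D) 0 (2 * K + 2) hadjseq (2 * i.val + 1)
        (by omega) (by have := i.isLt; omega)
      rwa [seq_odd i.val i.isLt, Fin.eta] at this
    have hzsup : ∀ i : Fin K, HV.z i ∈ (P0.copy seq_zero hend).support := by
      intro i
      rw [SimpleGraph.Walk.support_copy]
      have := mkWalk_mem_support (seq D) 0 (2 * K + 2) hadjseq (2 * i.val + 2)
        (by omega) (by have := i.isLt; omega)
      rwa [seq_even i.val i.isLt, Fin.eta] at this
    have ha : HV.a ∈ (P0.copy seq_zero hend).support :=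
      SimpleGraph.Walk.start_mem_support _
    have hb : HV.b ∈ (P0.copy seq_zero hend).support :=
      SimpleGraph.Walk.end_mem_support _
    intro v
    cases v with
    | orig o =>
      obtain ⟨i, hi⟩ := hD o
      have hadm : G.Adj (D i) o ∨ o = D i := hi.imp id Eq.symm
      refine ⟨HV.u i (D i), husup i, ?_⟩
      rw [SimpleGraph.dist_comm]
      have := SimpleGraph.dist_le (uOrigWalk i (D i) o hadm)
      rw [uOrigWalk_length] at this
      omega
    | u i j =>
      rcases Nat.lt_or_ge i.val K with h | h
      · refine ⟨HV.z ⟨i.val, h⟩, hzsup _, ?_⟩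
        have e : (⟨i.val, h⟩ : Fin K).castSucc = i := by ext; simp
        have hadj : (Hgraph n K G).Adj (HV.u i j) (HV.z ⟨i.val, h⟩) := by
          exact ⟨by simp, Or.inr (HRel.zlow ⟨i.val, h⟩ j)⟩
        have := SimpleGraph.dist_le (SimpleGraph.Walk.cons hadj SimpleGraph.Walk.nil)
        simp at this
        omega
      · have hi4 := i.isLt
        have hlast : i = Fin.last K := by ext; simp; omega
        refine ⟨HV.b, hb, ?_⟩
        rw [hlast]
        have hadj : (Hgraph n K G).Adj (HV.u (Fin.last K) j) HV.b :=
          ⟨by simp, Or.inr (HRel.bu j)⟩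
        have := SimpleGraph.dist_le (SimpleGraph.Walk.cons hadj SimpleGraph.Walk.nil)
        simp at this
        omega
    | z i =>
      exact ⟨HV.z i, hzsup i, by rw [SimpleGraph.dist_self]; omega⟩
    | s =>
      refine ⟨HV.a, ha, ?_⟩
      have hW := SimpleGraph.dist_le
        ((mkWalk (G := Hgraph n K G) (apFun n K) 0 (K + 2) (fun k _ h2 => apFun_adj (G := G) k (by omega))).copy
          apFun_zero (by rw [show 0 + (K + 2) = K + 2 by omega, apFun_end]))
      rw [SimpleGraph.Walk.length_copy, mkWalk_length] at hW
      omega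
    | a => exact ⟨HV.a, ha, by rw [SimpleGraph.dist_self]; omega⟩
    | b => exact ⟨HV.b, hb, by rw [SimpleGraph.dist_self]; omega⟩
    | t =>
      refine ⟨HV.b, hb, ?_⟩
      have hW := SimpleGraph.dist_le
        ((mkWalk (G := Hgraph n K G) (bpFun n K) 0 (K + 2) (fun k _ h2 => bpFun_adj (G := G) k (by omega))).copy
          bpFun_zero (by rw [show 0 + (K + 2) = K + 2 by omega, bpFun_end]))
      rw [SimpleGraph.Walk.length_copy, mkWalk_length] at hW
      omega
    | ap q =>
      refine ⟨HV.a, ha, ?_⟩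
      have hq4 := q.isLt
      have hW := SimpleGraph.dist_le
        ((mkWalk (G := Hgraph n K G) (apFun n K) (q.val + 1) (K + 1 - q.val)
            (fun k h1 h2 => apFun_adj (G := G) k (by omega))).copy
          (by rw [apFun_succ q.val q.isLt, Fin.eta])
          (by rw [show q.val + 1 + (K + 1 - q.val) = K + 2 by omega, apFun_end]))
      rw [SimpleGraph.Walk.length_copy, mkWalk_length] at hW
      omega
    | bp q =>
      refine ⟨HV.b, hb, ?_⟩
      have hq4 := q.isLt
      have hW := SimpleGraph.dist_le
        ((mkWalk (G := Hgraph n K G) (bpFun n K) (q.val + 1) (K + 1 - q.val)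
            (fun k h1 h2 => bpFun_adj (G := G) k (by omega))).copy
          (by rw [bpFun_succ q.val q.isLt, Fin.eta])
          (by rw [show q.val + 1 + (K + 1 - q.val) = K + 2 by omega, bpFun_end]))
      rw [SimpleGraph.Walk.length_copy, mkWalk_length] at hW
      omega
    | w i j t p =>
      by_cases hadm : G.Adj j t ∨ t = j
      · have hp4 := p.isLt
        rcases Nat.lt_or_ge i.val K with h | h
        · refine ⟨HV.z ⟨i.val, h⟩, hzsup _, ?_⟩
          rw [SimpleGraph.dist_comm]
          have e : (⟨i.val, h⟩ : Fin K).castSucc = i := by ext; simp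
          have hadj : (Hgraph n K G).Adj (HV.z ⟨i.val, h⟩) (HV.u i j) := by
            exact ⟨by simp, Or.inl (HRel.zlow ⟨i.val, h⟩ j)⟩
          have := SimpleGraph.dist_le (SimpleGraph.Walk.cons hadj (uWWalk i j t hadm p))
          rw [SimpleGraph.Walk.length_cons, uWWalk_length] at this
          omega
        · have hi4 := i.isLt
          have hlast : i = Fin.last K := by ext; simp; omega
          refine ⟨HV.b, hb, ?_⟩
          rw [SimpleGraph.dist_comm]
          have hadj : (Hgraph n K G).Adj HV.b (HV.u i j) := by
            rw [hlast]
            exact ⟨by simp, Or.inl (HRel.bu j)⟩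
          have := SimpleGraph.dist_le (SimpleGraph.Walk.cons hadj (uWWalk i j t hadm p))
          rw [SimpleGraph.Walk.length_cons, uWWalk_length] at this
          omega
      · refine ⟨HV.a, ha, ?_⟩
        have hiso : ∀ y, ¬ (Hgraph n K G).Adj (HV.w i j t p) y := by
          intro y hy
          rcases hy.2 with hrel | hrel
          · cases hrel <;> exact hadm ‹_›
          · cases hrel <;> exact hadm ‹_›
        have hnr : ¬ (Hgraph n K G).Reachable (HV.w i j t p) HV.a := by
          intro hr
          obtain ⟨q⟩ := hr
          cases q with
          | cons hadj q' => exact hiso _ hadj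
        rw [SimpleGraph.dist_eq_zero_of_not_reachable hnr]
        omega
end
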